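/- Let (α,ρ) be a lifting pair of the coupling ᾱ and φ ∈ Ω_B¹(L). Then (α + ad_φ, ρ + d_α φ + ½[φ,φ]) is again a lifting pair of ᾱ, and the associated 3-cocycles agree: d_{α+ad_φ}(ρ + d_α φ + ½[φ,φ]) = d_α ρ. -/

import Mathlib

/-!
Write `α' = α + ad_φ`. Since `ad_φ` is an `R`-linear derivation of `L`, `α'` is again a
derivation obeying the anchored Leibniz rule, and on forms `d_{α'} = d_α + [φ, ·]`. In the
curvature of `α'` the Leibniz rule for `α` turns the cross terms into `ad (d_α φ)`, and the
Jacobi identity turns `[ad φ₁, ad φ₂]` into `ad ⁅φ₁, φ₂⁆`. For the cocycle,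
`d_{α'} ρ' = d_α ρ + ([φ, ρ] + d_α d_α φ) + ([φ, d_α φ] + d_α ½[φ, φ]) + [φ, ½[φ, φ]]`,
and each bracketed term vanishes: `d_α² φ = [ρ, φ]` is the curvature identity (with the
Jacobi identity of `B` pushed through `φ`), `d_α` is a derivation of the bracket, and the last
term is the Jacobi identity of `L`.
-/

/-- The order-preserving inclusion `Fin (n-1) → Fin n` skipping the index `j`. -/
def skipIdx {n : ℕ} (j : Fin n) (m : Fin (n - 1)) : Fin n :=
  if (m : ℕ) < (j : ℕ) then ⟨m, by have := m.isLt; omega⟩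
  else ⟨(m : ℕ) + 1, by have := m.isLt; omega⟩

/-- The Chevalley–Eilenberg/de Rham differential of an `M`-valued `p`-form on a Lie
algebroid `B`, twisted by a connection `α : B → (M → M)`. -/
def dform {B M : Type*} [LieRing B] [AddCommGroup M]
    (α : B → M → M) (p : ℕ) (ξ : (Fin p → B) → M) :
    (Fin (p + 1) → B) → M :=
  fun s =>
    (∑ i : Fin (p + 1), ((-1 : ℤ) ^ (i : ℕ)) • α (s i) (ξ (s ∘ i.succAbove))) +
      ∑ i : Fin (p + 1), ∑ j : Fin p,
        if (i : ℕ) ≤ (j : ℕ) then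
          ((-1 : ℤ) ^ ((i : ℕ) + (j : ℕ) + 1)) •
            ξ (fun m : Fin p =>
              if hm : (m : ℕ) = 0 then ⁅s i, s (i.succAbove j)⁆
              else s (i.succAbove (skipIdx j ⟨(m : ℕ) - 1, by have := m.isLt; omega⟩)))
        else 0

/-- The adjoint operator `ad l = ⁅l, ·⁆` as a `k`-linear endomorphism of `L`. -/
def adE {k : Type*} [CommRing k] {L : Type*} [LieRing L] [LieAlgebra k L] (l : L) :
    L →ₗ[k] L where
  toFun x := ⁅l, x⁆
  map_add' := by simp
  map_smul' := by intro c x; exact lie_smul c l x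

/-- The part of `dform β` without the bracket terms of `B`; for `β b = ad (φ b)` it is the
shuffle bracket `[φ, ·]`. -/
def dformAct {B M : Type*} [AddCommGroup M] (β : B → M → M) (p : ℕ) (ξ : (Fin p → B) → M) :
    (Fin (p + 1) → B) → M :=
  fun s => ∑ i : Fin (p + 1), ((-1 : ℤ) ^ (i : ℕ)) • β (s i) (ξ (s ∘ i.succAbove))

@[simp]
theorem adE_apply {k L : Type*} [CommRing k] [LieRing L] [LieAlgebra k L] (l x : L) :
    adE (k := k) l x = ⁅l, x⁆ :=
  rfl

theorem dformAct_two_apply {B M : Type*} [AddCommGroup M] (β : B → M → M)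
    (ξ : (Fin 2 → B) → M) (s : Fin 3 → B) :
    dformAct β 2 ξ s
      = β (s 0) (ξ ![s 1, s 2]) - β (s 1) (ξ ![s 0, s 2]) + β (s 2) (ξ ![s 0, s 1]) := by
  have hξ : ξ = fun v => ξ ![v 0, v 1] := funext fun v => congrArg ξ (FinVec.etaExpand_eq v).symm
  conv_lhs => rw [hξ]
  simp [dformAct, Fin.sum_univ_three, Fin.succAbove]
  abel

theorem dformAct_ad_lie_self {B L : Type*} [LieRing L] (φ : B → L) (s : Fin 3 → B) :
    dformAct (fun b x => ⁅φ b, x⁆) 2 (fun v => ⁅φ (v 0), φ (v 1)⁆) s = 0 := by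
  simp only [dformAct_two_apply, Matrix.cons_val_zero, Matrix.cons_val_one]
  rw [leibniz_lie (φ (s 0)) (φ (s 1)) (φ (s 2)), ← lie_skew (φ (s 2)) ⁅φ (s 0), φ (s 1)⁆]
  abel

section Forms

variable {B M : Type*} [LieRing B] [AddCommGroup M]

theorem dform_add_connection (α β : B → M → M) (p : ℕ) (ξ : (Fin p → B) → M)
    (s : Fin (p + 1) → B) :
    dform (fun b x => α b x + β b x) p ξ s = dform α p ξ s + dformAct β p ξ s := by
  simp only [dform, dformAct, smul_add, Finset.sum_add_distrib]
  abel

theorem dform_add_form {F : Type*} [FunLike F M M] [AddMonoidHomClass F M M] (α : B → F)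
    (p : ℕ) (ξ η : (Fin p → B) → M) (s : Fin (p + 1) → B) :
    dform (fun b x => α b x) p (fun v => ξ v + η v) s
      = dform (fun b x => α b x) p ξ s + dform (fun b x => α b x) p η s := by
  simp only [dform, map_add, smul_add, Finset.sum_add_distrib, ite_add_zero]
  abel

theorem dform_one_apply (α : B → M → M) (ξ : (Fin 1 → B) → M) (s : Fin 2 → B) :
    dform α 1 ξ s = α (s 0) (ξ ![s 1]) - α (s 1) (ξ ![s 0]) - ξ ![⁅s 0, s 1⁆] := by
  have hξ : ξ = fun v => ξ ![v 0] := funext fun v => congrArg ξ (FinVec.etaExpand_eq v).symm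
  conv_lhs => rw [hξ]
  simp [dform, Fin.sum_univ_two, Fin.succAbove]
  abel

theorem dform_two_apply (α : B → M → M) (ξ : (Fin 2 → B) → M) (s : Fin 3 → B) :
    dform α 2 ξ s
      = α (s 0) (ξ ![s 1, s 2]) - α (s 1) (ξ ![s 0, s 2]) + α (s 2) (ξ ![s 0, s 1])
        - ξ ![⁅s 0, s 1⁆, s 2] + ξ ![⁅s 0, s 2⁆, s 1] - ξ ![⁅s 1, s 2⁆, s 0] := by
  have hξ : ξ = fun v => ξ ![v 0, v 1] := funext fun v => congrArg ξ (FinVec.etaExpand_eq v).symm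
  conv_lhs => rw [hξ]
  simp [dform, Fin.sum_univ_three, Fin.sum_univ_two, skipIdx, Fin.succAbove]
  abel

end Forms

theorem lie_lie_sub_lie_lie_add_lie_lie {B : Type*} [LieRing B] (x y z : B) :
    ⁅⁅x, y⁆, z⁆ - ⁅⁅x, z⁆, y⁆ + ⁅⁅y, z⁆, x⁆ = 0 := by
  rw [← lie_skew ⁅x, y⁆ z, ← lie_skew ⁅x, z⁆ y, ← lie_skew ⁅y, z⁆ x, ← lie_skew x z, lie_neg]
  linear_combination (norm := abel) -lie_jacobi x y z

section Connection

variable {B L : Type*} [LieRing B] [LieRing L]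

theorem dform_two_lie_self (α : B → L → L)
    (hD : ∀ (b : B) (l l' : L), α b ⁅l, l'⁆ = ⁅α b l, l'⁆ + ⁅l, α b l'⁆) (φ : B → L)
    (s : Fin 3 → B) :
    dform α 2 (fun v => ⁅φ (v 0), φ (v 1)⁆) s
      = -dformAct (fun b x => ⁅φ b, x⁆) 2 (dform α 1 (fun w => φ (w 0))) s := by
  simp only [dform_two_apply, dformAct_two_apply, dform_one_apply, Matrix.cons_val_zero,
    Matrix.cons_val_one, hD, lie_sub]
  rw [← lie_skew (α (s 0) (φ (s 1))) (φ (s 2)), ← lie_skew (α (s 1) (φ (s 0))) (φ (s 2)),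
    ← lie_skew (α (s 2) (φ (s 0))) (φ (s 1)), ← lie_skew (φ ⁅s 0, s 1⁆) (φ (s 2)),
    ← lie_skew (φ ⁅s 0, s 2⁆) (φ (s 1)), ← lie_skew (φ ⁅s 1, s 2⁆) (φ (s 0))]
  abel

theorem dform_two_dform_one {F G : Type*} [FunLike F L L] [AddMonoidHomClass F L L]
    [FunLike G B L] [AddMonoidHomClass G B L] (α : B → F) (ρ : (Fin 2 → B) → L)
    (hF : ∀ (b₁ b₂ : B) (l : L),
      α b₁ (α b₂ l) - α b₂ (α b₁ l) - α ⁅b₁, b₂⁆ l = ⁅ρ ![b₁, b₂], l⁆)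
    (φ : G) (s : Fin 3 → B) :
    dform (fun b x => α b x) 2 (dform (fun b x => α b x) 1 (fun w => φ (w 0))) s
      = -dformAct (fun b x => ⁅φ b, x⁆) 2 ρ s := by
  have hJ : φ ⁅⁅s 0, s 1⁆, s 2⁆ - φ ⁅⁅s 0, s 2⁆, s 1⁆ + φ ⁅⁅s 1, s 2⁆, s 0⁆ = 0 := by
    rw [← map_sub, ← map_add, lie_lie_sub_lie_lie_add_lie_lie, map_zero]
  simp only [dform_two_apply, dformAct_two_apply, dform_one_apply, Matrix.cons_val_zero,
    Matrix.cons_val_one, map_sub]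
  linear_combination (norm := abel) hF (s 0) (s 1) (φ (s 2)) - hF (s 0) (s 2) (φ (s 1))
    + hF (s 1) (s 2) (φ (s 0)) + hJ - lie_skew (φ (s 0)) (ρ ![s 1, s 2])
    + lie_skew (φ (s 1)) (ρ ![s 0, s 2]) - lie_skew (φ (s 2)) (ρ ![s 0, s 1])

variable {k : Type*} [CommRing k] [LieAlgebra k L]

theorem add_adE_lie (D : L →ₗ[k] L) (hD : ∀ l l' : L, D ⁅l, l'⁆ = ⁅D l, l'⁆ + ⁅l, D l'⁆)
    (x l l' : L) :
    (D + adE (k := k) x) ⁅l, l'⁆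
      = ⁅(D + adE (k := k) x) l, l'⁆ + ⁅l, (D + adE (k := k) x) l'⁆ := by
  simp only [LinearMap.add_apply, adE_apply, hD, leibniz_lie x l l', add_lie, lie_add]
  abel

theorem add_adE_smul {R : Type*} [CommRing R] [LieAlgebra R L] (D : L →ₗ[k] L) (δ : R → R)
    (hD : ∀ (f : R) (l : L), D (f • l) = f • D l + δ f • l) (x : L) (f : R) (l : L) :
    (D + adE (k := k) x) (f • l) = f • (D + adE (k := k) x) l + δ f • l := by
  simp only [LinearMap.add_apply, adE_apply, hD, lie_smul, smul_add]
  abel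

theorem curvature_add_adE (α : B → L →ₗ[k] L)
    (hD : ∀ (b : B) (l l' : L), α b ⁅l, l'⁆ = ⁅α b l, l'⁆ + ⁅l, α b l'⁆)
    (ρ : (Fin 2 → B) → L)
    (hF : ∀ (b₁ b₂ : B) (l : L),
      α b₁ (α b₂ l) - α b₂ (α b₁ l) - α ⁅b₁, b₂⁆ l = ⁅ρ ![b₁, b₂], l⁆)
    (φ : B → L) (b₁ b₂ : B) (l : L) :
    (α b₁ + adE (k := k) (φ b₁)) ((α b₂ + adE (k := k) (φ b₂)) l)
        - (α b₂ + adE (k := k) (φ b₂)) ((α b₁ + adE (k := k) (φ b₁)) l)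
        - (α ⁅b₁, b₂⁆ + adE (k := k) (φ ⁅b₁, b₂⁆)) l
      = ⁅ρ ![b₁, b₂] + dform (fun b x => α b x) 1 (fun w => φ (w 0)) ![b₁, b₂]
          + ⁅φ b₁, φ b₂⁆, l⁆ := by
  simp only [dform_one_apply, Matrix.cons_val_zero, Matrix.cons_val_one, LinearMap.add_apply,
    adE_apply, map_add, hD, add_lie, sub_lie, ← hF]
  rw [leibniz_lie (φ b₁) (φ b₂) l]
  abel

theorem dform_two_gauge_transform {G : Type*} [FunLike G B L] [AddMonoidHomClass G B L]
    (α : B → L →ₗ[k] L)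
    (hD : ∀ (b : B) (l l' : L), α b ⁅l, l'⁆ = ⁅α b l, l'⁆ + ⁅l, α b l'⁆)
    (ρ : (Fin 2 → B) → L)
    (hF : ∀ (b₁ b₂ : B) (l : L),
      α b₁ (α b₂ l) - α b₂ (α b₁ l) - α ⁅b₁, b₂⁆ l = ⁅ρ ![b₁, b₂], l⁆)
    (φ : G) (s : Fin 3 → B) :
    dform (fun b x => (α b + adE (k := k) (φ b)) x) 2
        (fun v => ρ v + dform (fun b x => α b x) 1 (fun w => φ (w 0)) v + ⁅φ (v 0), φ (v 1)⁆) s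
      = dform (fun b x => α b x) 2 ρ s := by
  rw [dform_add_form, dform_add_form]
  simp only [LinearMap.add_apply, adE_apply, dform_add_connection]
  rw [dform_two_dform_one α ρ hF, dform_two_lie_self _ hD, dformAct_ad_lie_self]
  abel

end Connection

theorem lifting_pair_gauge_transform_general
    {k : Type*} [Field k] {R : Type*} [CommRing R] [Algebra k R]
    {B : Type*} [LieRing B] [Module R B]
    {L : Type*} [LieRing L] [LieAlgebra k L] [LieAlgebra R L]
    (a : B →ₗ[R] Derivation k R R)
    (α : B → L →ₗ[k] L)
    (hD : ∀ (b : B) (l l' : L), α b ⁅l, l'⁆ = ⁅α b l, l'⁆ + ⁅l, α b l'⁆)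
    (hLeibα : ∀ (b : B) (f : R) (l : L), α b (f • l) = f • α b l + a b f • l)
    (ρ : B [⋀^Fin 2]→ₗ[R] L)
    (hF : ∀ (b₁ b₂ : B) (l : L),
      α b₁ (α b₂ l) - α b₂ (α b₁ l) - α ⁅b₁, b₂⁆ l = ⁅ρ ![b₁, b₂], l⁆)
    (φ : B →ₗ[R] L) :
    ∀ (α' : B → L →ₗ[k] L) (ρ' : (Fin 2 → B) → L),
      α' = (fun b => α b + adE (φ b)) →
      ρ' = (fun v : Fin 2 → B =>
        ρ v + dform (fun b x => α b x) 1 (fun w : Fin 1 → B => φ (w 0)) v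
          + ⁅φ (v 0), φ (v 1)⁆) →
      -- `(α', ρ')` is again a lifting pair of `ᾱ`:
      ((∀ (b : B) (l l' : L), α' b ⁅l, l'⁆ = ⁅α' b l, l'⁆ + ⁅l, α' b l'⁆) ∧
       (∀ (b : B) (f : R) (l : L), α' b (f • l) = f • α' b l + a b f • l) ∧
       (∀ (b : B) (l : L), ∃ l₀ : L, α' b l = α b l + ⁅l₀, l⁆) ∧
       (∀ (b₁ b₂ : B) (l : L),
         α' b₁ (α' b₂ l) - α' b₂ (α' b₁ l) - α' ⁅b₁, b₂⁆ l = ⁅ρ' ![b₁, b₂], l⁆)) ∧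
      -- and the associated cocycles agree:
      (∀ s : Fin 3 → B,
        dform (fun b x => α' b x) 2 ρ' s = dform (fun b x => α b x) 2 ⇑ρ s) := by
  rintro α' ρ' rfl rfl
  refine ⟨⟨fun b => add_adE_lie (α b) (hD b) (φ b),
    fun b => add_adE_smul (α b) (a b) (hLeibα b) (φ b),
    fun b l => ⟨φ b, rfl⟩,
    curvature_add_adE α hD ρ hF φ⟩,
    dform_two_gauge_transform α hD ρ hF φ⟩

/-- Let `(α, ρ)` be a lifting pair of the coupling `ᾱ` and
`φ ∈ Ω_B¹(L)`.  Then `(α + ad_φ, ρ + d_α φ + ½[φ,φ])` is again a lifting pair of `ᾱ`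
(here `½[φ,φ](b₁,b₂) = ⁅φ b₁, φ b₂⁆`), and the associated 3-cocycles agree:
`d_{α+ad_φ}(ρ + d_α φ + ½[φ,φ]) = d_α ρ`. -/
theorem lifting_pair_gauge_transform
    {k : Type*} [Field k] {R : Type*} [CommRing R] [Algebra k R]
    {B : Type*} [LieRing B] [LieAlgebra k B] [Module R B] [IsScalarTower k R B]
    {L : Type*} [LieRing L] [LieAlgebra k L] [LieAlgebra R L] [IsScalarTower k R L]
    (a : B →ₗ[R] Derivation k R R)
    (hLeibB : ∀ (s t : B) (f : R), ⁅s, f • t⁆ = f • ⁅s, t⁆ + a s f • t)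
    (α : B → L →ₗ[k] L)
    (hadd : ∀ b b' : B, α (b + b') = α b + α b')
    (hsmul : ∀ (f : R) (b : B) (l : L), α (f • b) l = f • α b l)
    (hD : ∀ (b : B) (l l' : L), α b ⁅l, l'⁆ = ⁅α b l, l'⁆ + ⁅l, α b l'⁆)
    (hLeibα : ∀ (b : B) (f : R) (l : L), α b (f • l) = f • α b l + a b f • l)
    (ρ : B [⋀^Fin 2]→ₗ[R] L)
    (hF : ∀ (b₁ b₂ : B) (l : L),
      α b₁ (α b₂ l) - α b₂ (α b₁ l) - α ⁅b₁, b₂⁆ l = ⁅ρ ![b₁, b₂], l⁆)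
    (φ : B →ₗ[R] L) :
    ∀ (α' : B → L →ₗ[k] L) (ρ' : (Fin 2 → B) → L),
      α' = (fun b => α b + adE (φ b)) →
      ρ' = (fun v : Fin 2 → B =>
        ρ v + dform (fun b x => α b x) 1 (fun w : Fin 1 → B => φ (w 0)) v
          + ⁅φ (v 0), φ (v 1)⁆) →
      -- `(α', ρ')` is again a lifting pair of `ᾱ`:
      ((∀ (b : B) (l l' : L), α' b ⁅l, l'⁆ = ⁅α' b l, l'⁆ + ⁅l, α' b l'⁆) ∧
       (∀ (b : B) (f : R) (l : L), α' b (f • l) = f • α' b l + a b f • l) ∧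
       (∀ (b : B) (l : L), ∃ l₀ : L, α' b l = α b l + ⁅l₀, l⁆) ∧
       (∀ (b₁ b₂ : B) (l : L),
         α' b₁ (α' b₂ l) - α' b₂ (α' b₁ l) - α' ⁅b₁, b₂⁆ l = ⁅ρ' ![b₁, b₂], l⁆)) ∧
      -- and the associated cocycles agree:
      (∀ s : Fin 3 → B,
        dform (fun b x => α' b x) 2 ρ' s = dform (fun b x => α b x) 2 ⇑ρ s) :=
  lifting_pair_gauge_transform_general a α hD hLeibα ρ hF φ
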